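/- arXiv:1302.7247 — 4 statements merged into one kernel-verified Lean document; each statement's English description precedes it below -/
import Mathlib

section
/- Let p, s be real numbers with 0 < p < 1, p ≠ 1/2, 0 < s < 1, let q = 1 − p, ω = p/q, and let i₀ ≥ 2 be an integer. Let τ₁ = max(1, ω), τ₂ = min(1, ω), and θ = [(τ₂^{i₀} − τ₁^{i₀})/(1 − s) − 2p(τ₂^{i₀−1} − τ₁^{i₀−1})]/(q(τ₂ − τ₁)). Then θ > 1 + ω^{i₀}; consequently θ² > 4ω^{i₀}, and the two real roots φ₁ = (θ + √(θ² − 4ω^{i₀}))/2 and φ₂ = (θ − √(θ² − 4ω^{i₀}))/2 of φ² − θφ + ω^{i₀} = 0 satisfy φ₁ > 1 > φ₂ > 0 and φ₁·φ₂ = ω^{i₀}. -/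
set_option maxHeartbeats 1000000 in
theorem phi_roots_omega_ne_one (p s q ω : ℝ) (i₀ : ℕ)
    (hp : 0 < p) (hp1 : p < 1) (hp2 : p ≠ 1 / 2) (hs : 0 < s) (hs1 : s < 1)
    (hq : q = 1 - p) (hω : ω = p / q) (hi₀ : 2 ≤ i₀)
    (τ₁ τ₂ θ φ₁ φ₂ : ℝ)
    (hτ₁ : τ₁ = max 1 ω) (hτ₂ : τ₂ = min 1 ω)
    (hθ : θ = ((τ₂ ^ i₀ - τ₁ ^ i₀) / (1 - s) - 2 * p * (τ₂ ^ (i₀ - 1) - τ₁ ^ (i₀ - 1))) /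
      (q * (τ₂ - τ₁)))
    (hφ₁ : φ₁ = (θ + Real.sqrt (θ ^ 2 - 4 * ω ^ i₀)) / 2)
    (hφ₂ : φ₂ = (θ - Real.sqrt (θ ^ 2 - 4 * ω ^ i₀)) / 2) :
    θ > 1 + ω ^ i₀ ∧ θ ^ 2 > 4 * ω ^ i₀ ∧
    φ₁ ^ 2 - θ * φ₁ + ω ^ i₀ = 0 ∧ φ₂ ^ 2 - θ * φ₂ + ω ^ i₀ = 0 ∧
    φ₁ > 1 ∧ 1 > φ₂ ∧ φ₂ > 0 ∧ φ₁ * φ₂ = ω ^ i₀ := by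
  obtain ⟨m, rfl⟩ : ∃ m, i₀ = m + 2 := ⟨i₀ - 2, by omega⟩
  subst hq
  have hq0 : 0 < 1 - p := by linarith
  have hω0 : 0 < ω := by rw [hω]; positivity
  have hω1 : ω ≠ 1 := by
    rw [hω]; intro h
    rw [div_eq_one_iff_eq hq0.ne'] at h
    apply hp2; linarith
  have hpq : ω * (1 - p) = p := by rw [hω]; field_simp
  have hs' : (1 : ℝ) - s ≠ 0 := by linarith
  have hi1 : m + 2 - 1 = m + 1 := by omega
  have hωsub : ω - 1 ≠ 0 := sub_ne_zero.mpr hω1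
  -- θ in terms of ω only
  have key1 : θ = ((ω ^ (m + 2) - 1) / (1 - s) - 2 * p * (ω ^ (m + 1) - 1)) /
      ((1 - p) * (ω - 1)) := by
    rw [hθ, hi1]
    rcases lt_or_gt_of_ne hω1 with h | h
    · rw [hτ₁, hτ₂, max_eq_left h.le, min_eq_right h.le]
      simp
    · rw [hτ₁, hτ₂, max_eq_right h.le, min_eq_left h.le]
      have h1 : (1 - p) * (1 - ω) ≠ 0 := by
        apply mul_ne_zero hq0.ne'; intro hh; apply hω1; linarith
      have h2 : (1 - p) * (ω - 1) ≠ 0 := mul_ne_zero hq0.ne' hωsub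
      rw [div_eq_div_iff h1 h2]
      simp only [one_pow]
      ring
  have keyG : 0 < (ω ^ (m + 2) - 1) / (ω - 1) := by
    rcases lt_or_gt_of_ne hω1 with h | h
    · apply div_pos_of_neg_of_neg
      · have := pow_lt_one₀ hω0.le h (n := m + 2) (by omega)
        linarith
      · linarith
    · apply div_pos
      · have := one_lt_pow₀ h (n := m + 2) (by omega)
        linarith
      · linarith
  have hpoly : (ω ^ (m + 2) - 1) - 2 * p * (ω ^ (m + 1) - 1) =
      (1 + ω ^ (m + 2)) * ((1 - p) * (ω - 1)) := by
    linear_combination (ω ^ m * (2 * ω - ω ^ 2) - 1) * hpq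
  have e1 : (ω ^ (m + 2) - 1) / (1 - s) - 2 * p * (ω ^ (m + 1) - 1)
      = (1 + ω ^ (m + 2)) * ((1 - p) * (ω - 1)) + (s / (1 - s)) * (ω ^ (m + 2) - 1) := by
    field_simp
    linear_combination (1 - s) * hpoly
  have e2 : (s / (1 - s)) * (ω ^ (m + 2) - 1) / ((1 - p) * (ω - 1))
      = (s / ((1 - s) * (1 - p))) * ((ω ^ (m + 2) - 1) / (ω - 1)) := by
    rw [div_mul_eq_mul_div, div_div, div_mul_div_comm, mul_assoc]
  have key3 : θ = 1 + ω ^ (m + 2) +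
      (s / ((1 - s) * (1 - p))) * ((ω ^ (m + 2) - 1) / (ω - 1)) := by
    rw [key1, e1, add_div, e2, mul_div_assoc,
      div_self (mul_ne_zero hq0.ne' hωsub), mul_one]
  have hθgt : θ > 1 + ω ^ (m + 2) := by
    rw [key3]
    have : 0 < (s / ((1 - s) * (1 - p))) * ((ω ^ (m + 2) - 1) / (ω - 1)) := by
      apply mul_pos _ keyG
      apply div_pos hs (mul_pos (by linarith) hq0)
    linarith
  have hw0 : 0 < ω ^ (m + 2) := pow_pos hω0 _
  have hθ2 : θ ^ 2 > 4 * ω ^ (m + 2) := by nlinarith [sq_nonneg (ω ^ (m + 2) - 1)]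
  set w := ω ^ (m + 2) with hw
  set δ := Real.sqrt (θ ^ 2 - 4 * w) with hδdef
  have hδ0 : 0 < δ := Real.sqrt_pos.mpr (by linarith)
  have hδ2 : δ ^ 2 = θ ^ 2 - 4 * w := Real.sq_sqrt (by linarith)
  have hθpos : 0 < θ := by nlinarith
  have hkey : δ ^ 2 > (θ - 2) ^ 2 := by nlinarith
  have h1 : θ + δ > 2 := by nlinarith [hkey, hδ0]
  have h2 : θ - δ < 2 := by nlinarith [hkey, hδ0]
  have h3 : θ - δ > 0 := by nlinarith [hδ2, hδ0, hw0, hθpos]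
  refine ⟨hθgt, hθ2, ?_, ?_, ?_, ?_, ?_, ?_⟩
  · rw [hφ₁]; linear_combination hδ2 / 4
  · rw [hφ₂]; linear_combination hδ2 / 4
  · rw [hφ₁]; linarith
  · rw [hφ₂]; linarith
  · rw [hφ₂]; linarith
  · rw [hφ₁, hφ₂]; linear_combination -hδ2 / 4
end

section
/- (Theorem 1, case z = 1 and ω = 1.) For every j ∈ ℕ the family (P_A(m, j))_{m ∈ ℕ} is summable, and with U_j = ∑'_{m} P_A(m, j) one has U_0 = φ₂, and for every integer k ≥ 1, U_{k·i₀} = 2·i₀·φ₂^k/(1 − s). -/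
/-- Player A's survival factor: 0 at the absorbing state 0, `1 - s` at the
multiple function barriers (positive multiples of `i₀`), and 1 elsewhere. -/
noncomputable def cA (s : ℝ) (i₀ : ℕ) (i : ℕ) : ℝ :=
  if i = 0 then 0 else if i₀ ∣ i then 1 - s else 1

/-- Player A's non-absorption arrival probabilities: `PA p s i₀ m j` is the
probability that player A, starting at `i₀`, is at state `j` after `m` steps
without absorption having taken place. -/
noncomputable def PA (p s : ℝ) (i₀ : ℕ) : ℕ → ℕ → ℝ
  | 0, j => if j = i₀ then 1 else 0
  | m + 1, 0 => (1 - p) * cA s i₀ 1 * PA p s i₀ m 1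
  | m + 1, j + 1 =>
      p * cA s i₀ j * PA p s i₀ m j + (1 - p) * cA s i₀ (j + 2) * PA p s i₀ m (j + 2)

section Aux

variable {s θ φ₂ : ℝ} {i₀ : ℕ}

lemma cA_nonneg (hs1 : s ≤ 1) (i : ℕ) : 0 ≤ cA s i₀ i := by
  unfold cA; split_ifs <;> norm_num <;> linarith

lemma cA_le_one (hs : 0 ≤ s) (i : ℕ) : cA s i₀ i ≤ 1 := by
  unfold cA; split_ifs <;> norm_num <;> linarith

lemma cA_zero : cA s i₀ 0 = 0 := by simp [cA]

lemma cA_of_not_dvd {i : ℕ} (h0 : i ≠ 0) (h : ¬ i₀ ∣ i) : cA s i₀ i = 1 := by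
  simp [cA, h0, h]

lemma cA_of_dvd {i : ℕ} (h0 : i ≠ 0) (h : i₀ ∣ i) : cA s i₀ i = 1 - s := by
  simp [cA, h0, h]

lemma cA_pos (hs1 : s < 1) {i : ℕ} (h0 : i ≠ 0) : 0 < cA s i₀ i := by
  unfold cA; rw [if_neg h0]; split_ifs
  · linarith
  · norm_num

lemma one_sub_le_cA (hs : 0 ≤ s) {i : ℕ} (h0 : i ≠ 0) : 1 - s ≤ cA s i₀ i := by
  unfold cA; rw [if_neg h0]; split_ifs
  · exact le_refl _
  · linarith

lemma PA_nonneg (hs : 0 ≤ s) (hs1 : s ≤ 1) : ∀ m j, 0 ≤ PA (1/2) s i₀ m j := by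
  intro m
  induction m with
  | zero => intro j; simp only [PA]; split_ifs <;> norm_num
  | succ m ih =>
    intro j
    match j with
    | 0 =>
      simp only [PA]
      have h1 := cA_nonneg (i₀ := i₀) hs1 1
      have h2 := ih 1
      positivity
    | j + 1 =>
      simp only [PA]
      have h1 := cA_nonneg (i₀ := i₀) hs1 j
      have h2 := cA_nonneg (i₀ := i₀) hs1 (j+2)
      have h3 := ih j
      have h4 := ih (j+2)
      positivity

noncomputable def Vf (i₀ : ℕ) (φ₂ : ℝ) (j : ℕ) : ℝ :=
  if j ≤ i₀ then 2 * j * φ₂ else 2 * φ₂ ^ (j / i₀) * ((i₀ : ℝ) + ((j % i₀ : ℕ) : ℝ) * (φ₂ - 1))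

noncomputable def Uf (s : ℝ) (i₀ : ℕ) (φ₂ : ℝ) (j : ℕ) : ℝ :=
  if j = 0 then φ₂ else Vf i₀ φ₂ j / cA s i₀ j

lemma Vf_small {j : ℕ} (h : j ≤ i₀) : Vf i₀ φ₂ j = 2 * j * φ₂ := if_pos h

lemma Vf_eq (hp : 0 < i₀) {k r : ℕ} (hk : 1 ≤ k) (hr : r ≤ i₀) :
    Vf i₀ φ₂ (k * i₀ + r) = 2 * φ₂ ^ k * ((i₀ : ℝ) + (r : ℝ) * (φ₂ - 1)) := by
  by_cases h : k * i₀ + r ≤ i₀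
  · have hle : i₀ ≤ k * i₀ := Nat.le_mul_of_pos_left i₀ hk
    have hr0 : r = 0 := by omega
    have hki : k * i₀ = i₀ := by omega
    have hk1 : k = 1 := Nat.eq_of_mul_eq_mul_right hp (by rw [one_mul]; exact hki)
    subst hr0; subst hk1
    rw [Vf_small (by simpa using h)]
    push_cast; ring
  · rcases eq_or_lt_of_le hr with hri | hrlt
    · rw [hri]
      have h2 : ¬ ((k+1) * i₀ ≤ i₀) := by
        have h3 : 2 * i₀ ≤ (k+1) * i₀ := Nat.mul_le_mul_right i₀ (by omega)
        omega
      unfold Vf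
      rw [show k * i₀ + i₀ = (k+1) * i₀ by ring, if_neg h2,
        Nat.mul_div_cancel _ hp, Nat.mul_mod_left]
      push_cast; ring
    · have hd : (k * i₀ + r) / i₀ = k := by
        rw [show k * i₀ + r = i₀ * k + r by ring, Nat.mul_add_div hp,
          Nat.div_eq_of_lt hrlt, Nat.add_zero]
      have hm : (k * i₀ + r) % i₀ = r := by
        rw [show k * i₀ + r = i₀ * k + r by ring, Nat.mul_add_mod, Nat.mod_eq_of_lt hrlt]
      unfold Vf
      rw [if_neg h, hd, hm]

lemma Vf_bounds (hp : 0 < i₀) (hφ0 : 0 ≤ φ₂) (hφ1 : φ₂ ≤ 1) (j : ℕ) :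
    0 ≤ Vf i₀ φ₂ j ∧ Vf i₀ φ₂ j ≤ 2 * (i₀ : ℝ) := by
  unfold Vf
  split_ifs with h
  · have hj : (j : ℝ) ≤ (i₀ : ℝ) := by exact_mod_cast h
    have hj0 : (0:ℝ) ≤ (j : ℝ) := by positivity
    constructor
    · positivity
    · nlinarith
  · set k := j / i₀ with hk
    set r := j % i₀ with hr
    have hrlt : r < i₀ := Nat.mod_lt _ hp
    have hrr : (r : ℝ) ≤ (i₀ : ℝ) := by exact_mod_cast hrlt.le
    have hr0 : (0:ℝ) ≤ (r : ℝ) := by positivity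
    have hpk : 0 ≤ φ₂ ^ k := by positivity
    have hpk1 : φ₂ ^ k ≤ 1 := pow_le_one₀ hφ0 hφ1
    have hin : 0 ≤ (i₀ : ℝ) + (r : ℝ) * (φ₂ - 1) := by nlinarith
    have hin2 : (i₀ : ℝ) + (r : ℝ) * (φ₂ - 1) ≤ (i₀ : ℝ) := by nlinarith
    constructor
    · positivity
    · nlinarith

lemma Urec (hs1 : s < 1) (hi₀ : 2 ≤ i₀)
    (hroot : φ₂ ^ 2 - θ * φ₂ + 1 = 0)
    (hts : θ * (1 - s) = 2 * (i₀ : ℝ) + 2 * (1 - (i₀ : ℝ)) * (1 - s))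
    (n : ℕ) (hn : 1 ≤ n) :
    Uf s i₀ φ₂ n = (if n = i₀ then (1:ℝ) else 0)
      + (1/2) * (Vf i₀ φ₂ (n - 1) + Vf i₀ φ₂ (n + 1)) := by
  have hp : 0 < i₀ := by omega
  have h1s : (0:ℝ) < 1 - s := by linarith
  rcases lt_trichotomy n i₀ with hlt | heq | hgt
  · -- 1 ≤ n < i₀
    obtain ⟨m, rfl⟩ : ∃ m, n = m + 1 := ⟨n - 1, by omega⟩
    have hne : ¬ i₀ ∣ (m+1) := Nat.not_dvd_of_pos_of_lt (by omega) hlt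
    rw [Uf, if_neg (by omega), cA_of_not_dvd (by omega) hne,
      Vf_small (le_of_lt hlt), Vf_small (by omega : m + 1 - 1 ≤ i₀),
      Vf_small (by omega : m + 1 + 1 ≤ i₀), if_neg (by omega)]
    simp only [Nat.add_sub_cancel]
    push_cast
    ring
  · rw [heq]
    have hdvd : i₀ ∣ i₀ := dvd_refl _
    rw [Uf, if_neg (by omega), cA_of_dvd (by omega) hdvd,
      Vf_small (by omega : i₀ - 1 ≤ i₀),
      show i₀ + 1 = 1 * i₀ + 1 by ring, Vf_eq hp le_rfl (by omega), if_pos rfl]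
    rw [div_eq_iff (by linarith : (1:ℝ) - s ≠ 0), Vf_small le_rfl]
    have hcast : ((i₀ - 1 : ℕ) : ℝ) = (i₀ : ℝ) - 1 := by
      rw [Nat.cast_sub (by omega)]; norm_num
    rw [hcast]
    push_cast
    linear_combination (-(1-s)) * hroot + (-φ₂) * hts
  · -- i₀ < n
    obtain ⟨k, r, hdm, hrlt⟩ : ∃ k r, k * i₀ + r = n ∧ r < i₀ :=
      ⟨n / i₀, n % i₀, by rw [Nat.mul_comm]; exact Nat.div_add_mod n i₀, Nat.mod_lt _ hp⟩
    have hnne : n ≠ i₀ := by omega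
    rw [if_neg hnne]
    match k, hdm with
    | 0, hdm => exfalso; rw [Nat.zero_mul, Nat.zero_add] at hdm; omega
    | (K+1), hdm =>
      by_cases hr0 : r = 0
      · -- n = (K+1) * i₀, K ≥ 1
        subst hr0
        have hK1 : 1 ≤ K := by
          rcases Nat.eq_zero_or_pos K with h0 | h0
          · exfalso; subst h0; rw [Nat.one_mul, Nat.add_zero] at hdm; omega
          · exact h0
        have hdvd : i₀ ∣ n := ⟨K + 1, by rw [Nat.mul_comm]; omega⟩
        have hn1 : n - 1 = K * i₀ + (i₀ - 1) := by
          have : (K+1) * i₀ = K * i₀ + i₀ := by ring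
          omega
        have hn2 : n + 1 = (K+1) * i₀ + 1 := by omega
        rw [Uf, if_neg (by omega), cA_of_dvd (by omega) hdvd, hn1, hn2,
          Vf_eq hp hK1 (by omega), Vf_eq hp (by omega) (by omega),
          show n = (K+1) * i₀ + 0 by omega, Vf_eq hp (by omega) (by omega)]
        rw [div_eq_iff (by linarith : (1:ℝ) - s ≠ 0)]
        have hcast : ((i₀ - 1 : ℕ) : ℝ) = (i₀ : ℝ) - 1 := by
          rw [Nat.cast_sub (by omega)]; norm_num
        rw [hcast]
        push_cast
        linear_combination (-(1-s) * φ₂ ^ K) * hroot + (-φ₂ ^ (K + 1)) * hts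
      · -- r ≥ 1
        have hmod : n % i₀ = r := by
          rw [← hdm, show (K+1) * i₀ + r = i₀ * (K+1) + r from by ring,
            Nat.mul_add_mod, Nat.mod_eq_of_lt hrlt]
        have hnd : ¬ i₀ ∣ n := by
          intro hd
          rcases hd with ⟨t, ht⟩
          have h0 : n % i₀ = 0 := by rw [ht, Nat.mul_mod_right]
          omega
        have hn1 : n - 1 = (K+1) * i₀ + (r - 1) := by omega
        have hn2 : n + 1 = (K+1) * i₀ + (r + 1) := by omega
        rw [Uf, if_neg (by omega), cA_of_not_dvd (by omega) hnd, hn1, hn2,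
          show n = (K+1) * i₀ + r by omega,
          Vf_eq hp (by omega) (by omega), Vf_eq hp (by omega) (by omega),
          Vf_eq hp (by omega) (by omega)]
        have hcast : ((r - 1 : ℕ) : ℝ) = (r : ℝ) - 1 := by
          rw [Nat.cast_sub (by omega)]; norm_num
        rw [hcast]
        push_cast
        ring

lemma cUf (hs1 : s < 1) (j : ℕ) : cA s i₀ j * Uf s i₀ φ₂ j = Vf i₀ φ₂ j := by
  match j with
  | 0 =>
    rw [cA_zero, Vf_small (Nat.zero_le _)]
    simp
  | j + 1 =>
    rw [Uf, if_neg (Nat.succ_ne_zero _), mul_comm,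
      div_mul_cancel₀ _ (cA_pos hs1 (Nat.succ_ne_zero _)).ne']

lemma Uf_nonneg (hs1 : s < 1) (hp : 0 < i₀) (hφ0 : 0 ≤ φ₂) (hφ1 : φ₂ ≤ 1) (j : ℕ) :
    0 ≤ Uf s i₀ φ₂ j := by
  match j with
  | 0 => rw [Uf]; simpa using hφ0
  | j + 1 =>
    rw [Uf, if_neg (Nat.succ_ne_zero _)]
    exact div_nonneg (Vf_bounds hp hφ0 hφ1 _).1 (cA_pos hs1 (Nat.succ_ne_zero _)).le

lemma Uf_le (hs0 : 0 ≤ s) (hs1 : s < 1) (hi₀ : 2 ≤ i₀) (hφ0 : 0 ≤ φ₂) (hφ1 : φ₂ ≤ 1)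
    (j : ℕ) : Uf s i₀ φ₂ j ≤ 2 * (i₀ : ℝ) / (1 - s) := by
  have hp : 0 < i₀ := by omega
  have h1s : (0:ℝ) < 1 - s := by linarith
  have hi2 : (2:ℝ) ≤ (i₀:ℝ) := by exact_mod_cast hi₀
  match j with
  | 0 =>
    have h0 : Uf s i₀ φ₂ 0 = φ₂ := by rw [Uf]; norm_num
    rw [h0, le_div_iff₀ h1s]
    nlinarith
  | j + 1 =>
    rw [Uf, if_neg (Nat.succ_ne_zero _)]
    have h1 := (Vf_bounds (φ₂ := φ₂) hp hφ0 hφ1 (j+1)).2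
    have h2 := (Vf_bounds (φ₂ := φ₂) hp hφ0 hφ1 (j+1)).1
    have h3 := one_sub_le_cA (i₀ := i₀) hs0 (Nat.succ_ne_zero j)
    have h4 := cA_pos (i₀ := i₀) hs1 (Nat.succ_ne_zero j)
    exact div_le_div₀ (by positivity) h1 h1s h3

lemma PA_zero_eq (j : ℕ) : PA (1/2) s i₀ 0 j = if j = i₀ then (1:ℝ) else 0 := rfl

lemma PA_succ_zero (m : ℕ) :
    PA (1/2) s i₀ (m+1) 0 = (1/2) * cA s i₀ 1 * PA (1/2) s i₀ m 1 := by
  show (1 - 1/2 : ℝ) * _ * _ = _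
  norm_num

lemma PA_succ_succ (m j : ℕ) :
    PA (1/2) s i₀ (m+1) (j+1) = (1/2) * cA s i₀ j * PA (1/2) s i₀ m j
      + (1/2) * cA s i₀ (j+2) * PA (1/2) s i₀ m (j+2) := by
  show (1/2 : ℝ) * _ * _ + (1 - 1/2 : ℝ) * _ * _ = _
  norm_num

lemma Sbound (hs0 : 0 ≤ s) (hs1 : s < 1) (hi₀ : 2 ≤ i₀) (hφ0 : 0 ≤ φ₂) (hφ1 : φ₂ ≤ 1)
    (hroot : φ₂ ^ 2 - θ * φ₂ + 1 = 0)
    (hts : θ * (1 - s) = 2 * (i₀ : ℝ) + 2 * (1 - (i₀ : ℝ)) * (1 - s)) :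
    ∀ M j, ∑ m ∈ Finset.range M, PA (1/2) s i₀ m j ≤ Uf s i₀ φ₂ j := by
  have hp : 0 < i₀ := by omega
  intro M
  induction M with
  | zero => intro j; simpa using Uf_nonneg hs1 hp hφ0 hφ1 j
  | succ M ih =>
    intro j
    rw [Finset.sum_range_succ']
    match j with
    | 0 =>
      simp only [PA_succ_zero, PA_zero_eq]
      rw [if_neg (by omega : (0:ℕ) ≠ i₀), add_zero]
      rw [← Finset.mul_sum]
      have hc : (0:ℝ) ≤ (1/2 : ℝ) * cA s i₀ 1 := by
        have := cA_nonneg (i₀ := i₀) hs1.le 1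
        positivity
      have h1 := mul_le_mul_of_nonneg_left (ih 1) hc
      have h2 : (1/2 : ℝ) * cA s i₀ 1 * Uf s i₀ φ₂ 1 = Uf s i₀ φ₂ 0 := by
        rw [mul_assoc, cUf hs1, Vf_small (by omega : 1 ≤ i₀), Uf, if_pos rfl]
        push_cast
        ring
      linarith
    | j + 1 =>
      simp only [PA_succ_succ, PA_zero_eq]
      rw [Finset.sum_add_distrib]
      rw [← Finset.mul_sum, ← Finset.mul_sum]
      have hc1 : (0:ℝ) ≤ (1/2 : ℝ) * cA s i₀ j := by
        have := cA_nonneg (i₀ := i₀) hs1.le j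
        positivity
      have hc2 : (0:ℝ) ≤ (1/2 : ℝ) * cA s i₀ (j+2) := by
        have := cA_nonneg (i₀ := i₀) hs1.le (j+2)
        positivity
      have h1 := mul_le_mul_of_nonneg_left (ih j) hc1
      have h2 := mul_le_mul_of_nonneg_left (ih (j+2)) hc2
      have key := Urec hs1 hi₀ hroot hts (j+1) (by omega)
      simp only [Nat.add_sub_cancel] at key
      rw [← cUf (i₀ := i₀) (φ₂ := φ₂) hs1 j, ← cUf (i₀ := i₀) (φ₂ := φ₂) hs1 (j+2)] at key
      rw [key]
      split_ifs <;> nlinarith [h1, h2]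

lemma PA_summable (hs0 : 0 ≤ s) (hs1 : s < 1) (hi₀ : 2 ≤ i₀) (hφ0 : 0 ≤ φ₂) (hφ1 : φ₂ ≤ 1)
    (hroot : φ₂ ^ 2 - θ * φ₂ + 1 = 0)
    (hts : θ * (1 - s) = 2 * (i₀ : ℝ) + 2 * (1 - (i₀ : ℝ)) * (1 - s)) (j : ℕ) :
    Summable (fun m : ℕ => PA (1/2) s i₀ m j) :=
  summable_of_sum_range_le (fun m => PA_nonneg hs0 hs1.le m j)
    (fun n => Sbound hs0 hs1 hi₀ hφ0 hφ1 hroot hts n j)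

lemma W_eq_U (hs0 : 0 ≤ s) (hs1 : s < 1) (hi₀ : 2 ≤ i₀) (hφ0 : 0 ≤ φ₂) (hφ1 : φ₂ ≤ 1)
    (hroot : φ₂ ^ 2 - θ * φ₂ + 1 = 0)
    (hts : θ * (1 - s) = 2 * (i₀ : ℝ) + 2 * (1 - (i₀ : ℝ)) * (1 - s)) :
    ∀ j : ℕ, (∑' m : ℕ, PA (1/2) s i₀ m j) = Uf s i₀ φ₂ j := by
  have hp : 0 < i₀ := by omega
  have h1s : (0:ℝ) < 1 - s := by linarith
  have hsum : ∀ j : ℕ, Summable (fun m : ℕ => PA (1/2) s i₀ m j) :=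
    PA_summable hs0 hs1 hi₀ hφ0 hφ1 hroot hts
  set W : ℕ → ℝ := fun j => ∑' m : ℕ, PA (1/2) s i₀ m j with hWdef
  set D : ℕ → ℝ := fun j => Uf s i₀ φ₂ j - W j with hDdef
  set E : ℕ → ℝ := fun j => cA s i₀ j * D j with hEdef
  have hWle : ∀ j, W j ≤ Uf s i₀ φ₂ j := fun j =>
    Summable.tsum_le_of_sum_range_le (hsum j) (fun n => Sbound hs0 hs1 hi₀ hφ0 hφ1 hroot hts n j)
  have hWnn : ∀ j, 0 ≤ W j := fun j => tsum_nonneg (fun m => PA_nonneg hs0 hs1.le m j)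
  have hDnn : ∀ j, 0 ≤ D j := fun j => sub_nonneg.mpr (hWle j)
  have hDle : ∀ j, D j ≤ Uf s i₀ φ₂ j := fun j => by
    have := hWnn j; simp only [hDdef]; linarith
  have hED : ∀ j, E j ≤ D j := fun j => by
    have h1 := cA_le_one (i₀ := i₀) hs0 j
    have h2 := cA_nonneg (i₀ := i₀) hs1.le j
    have h3 := hDnn j
    simp only [hEdef]
    nlinarith
  have hEnn : ∀ j, 0 ≤ E j := fun j =>
    mul_nonneg (cA_nonneg hs1.le j) (hDnn j)
  have hWrec0 : W 0 = (1/2 : ℝ) * cA s i₀ 1 * W 1 := by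
    simp only [hWdef]
    rw [Summable.tsum_eq_zero_add (hsum 0), PA_zero_eq, if_neg (by omega : (0:ℕ) ≠ i₀)]
    have : ∀ m : ℕ, PA (1/2) s i₀ (m+1) 0 = ((1/2 : ℝ) * cA s i₀ 1) * PA (1/2) s i₀ m 1 :=
      fun m => by rw [PA_succ_zero]
    rw [tsum_congr this, tsum_mul_left]
    ring
  have hWrec : ∀ j : ℕ, W (j+1) = (if j+1 = i₀ then (1:ℝ) else 0)
      + (1/2) * cA s i₀ j * W j + (1/2) * cA s i₀ (j+2) * W (j+2) := by
    intro j
    simp only [hWdef]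
    rw [Summable.tsum_eq_zero_add (hsum (j+1)), PA_zero_eq]
    have heq : ∀ m : ℕ, PA (1/2) s i₀ (m+1) (j+1)
        = ((1/2 : ℝ) * cA s i₀ j) * PA (1/2) s i₀ m j
          + ((1/2 : ℝ) * cA s i₀ (j+2)) * PA (1/2) s i₀ m (j+2) :=
      fun m => by rw [PA_succ_succ]
    rw [tsum_congr heq, Summable.tsum_add ((hsum j).mul_left _) ((hsum (j+2)).mul_left _),
      tsum_mul_left, tsum_mul_left]
    ring
  have hcu : ∀ j, cA s i₀ j * Uf s i₀ φ₂ j = Vf i₀ φ₂ j := cUf hs1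
  have hDrec : ∀ j : ℕ, 2 * D (j+1) = E j + E (j+2) := by
    intro j
    have key := Urec hs1 hi₀ hroot hts (j+1) (by omega)
    simp only [Nat.add_sub_cancel] at key
    rw [← hcu j, ← hcu (j+2)] at key
    have hw := hWrec j
    have e1 : E j = cA s i₀ j * Uf s i₀ φ₂ j - cA s i₀ j * W j := by
      simp only [hEdef, hDdef]; ring
    have e2 : E (j+2) = cA s i₀ (j+2) * Uf s i₀ φ₂ (j+2) - cA s i₀ (j+2) * W (j+2) := by
      simp only [hEdef, hDdef]; ring
    have e3 : D (j+1) = Uf s i₀ φ₂ (j+1) - W (j+1) := rfl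
    rw [e3, e1, e2, key, hw]
    ring
  have hU0 : Uf s i₀ φ₂ 0 = (1/2 : ℝ) * (cA s i₀ 1 * Uf s i₀ φ₂ 1) := by
    rw [hcu 1, Vf_small (by omega : 1 ≤ i₀), Uf, if_pos rfl]
    push_cast
    ring
  have hD0 : 2 * D 0 = E 1 := by
    have e1 : E 1 = cA s i₀ 1 * Uf s i₀ φ₂ 1 - cA s i₀ 1 * W 1 := by
      simp only [hEdef, hDdef]; ring
    have e3 : D 0 = Uf s i₀ φ₂ 0 - W 0 := rfl
    rw [e3, e1, hU0, hWrec0]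
    ring
  have hE0 : E 0 = 0 := by simp only [hEdef, cA_zero, zero_mul]
  have hslope : ∀ j : ℕ, E (j+1) - E j ≤ E (j+2) - E (j+1) := by
    intro j
    have h1 := hDrec j
    have h2 := hED (j+1)
    linarith
  have hstep : ∀ j : ℕ, E 1 ≤ E (j+1) - E j := by
    intro j
    induction j with
    | zero => rw [hE0]; linarith
    | succ j ih => exact le_trans ih (hslope j)
  have hgrow : ∀ j : ℕ, (j : ℝ) * E 1 ≤ E j := by
    intro j
    induction j with
    | zero => simp [hE0]
    | succ j ih =>
      have := hstep j
      push_cast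
      linarith
  have hEub : ∀ j, E j ≤ 2 * (i₀ : ℝ) / (1 - s) := fun j =>
    le_trans (hED j) (le_trans (hDle j) (Uf_le hs0 hs1 hi₀ hφ0 hφ1 j))
  have hE1 : E 1 = 0 := by
    by_contra h
    have hpos : 0 < E 1 := lt_of_le_of_ne (hEnn 1) (Ne.symm h)
    obtain ⟨n, hn⟩ := exists_nat_gt ((2 * (i₀ : ℝ) / (1 - s)) / E 1)
    have h1 : 2 * (i₀ : ℝ) / (1 - s) < (n : ℝ) * E 1 := (div_lt_iff₀ hpos).mp hn
    have h2 := hgrow n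
    have h3 := hEub n
    linarith
  have hEall : ∀ j : ℕ, E j = 0 ∧ E (j+1) = 0 := by
    intro j
    induction j with
    | zero => exact ⟨hE0, hE1⟩
    | succ j ih =>
      refine ⟨ih.2, ?_⟩
      have hD1 : D (j+1) = 0 := by
        have hz : cA s i₀ (j+1) * D (j+1) = 0 := ih.2
        exact (mul_eq_zero.mp hz).resolve_left (cA_pos hs1 (Nat.succ_ne_zero j)).ne'
      have := hDrec j
      have h0 := ih.1
      linarith
  have hDall : ∀ j : ℕ, D j = 0 := by
    intro j
    match j with
    | 0 => linarith [hD0, hE1]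
    | j + 1 =>
      have hz : cA s i₀ (j+1) * D (j+1) = 0 := (hEall (j+1)).1
      exact (mul_eq_zero.mp hz).resolve_left (cA_pos hs1 (Nat.succ_ne_zero j)).ne'
  intro j
  have h := hDall j
  simp only [hDdef, hWdef] at h
  linarith [h]

end Aux

/-- Theorem 1 of the paper, case `z = 1` and `ω = 1` (i.e. `p = q = 1/2`):
`U_j = ∑' m, P_A(m, j)` on the multiple function barriers. -/
theorem theorem1_case_z_eq_one_omega_eq_one (s : ℝ) (i₀ : ℕ)
    (hs : 0 < s) (hs1 : s < 1) (hi₀ : 2 ≤ i₀)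
    (θ φ₂ : ℝ)
    (hθ : θ = 2 * ((i₀ : ℝ) / (1 - s) + 1 - (i₀ : ℝ)))
    (hφ₂ : φ₂ = (θ - Real.sqrt (θ ^ 2 - 4)) / 2) :
    (∀ j : ℕ, Summable (fun m : ℕ => PA (1 / 2) s i₀ m j)) ∧
    (∑' m : ℕ, PA (1 / 2) s i₀ m 0) = φ₂ ∧
    ∀ k : ℕ, 1 ≤ k →
      (∑' m : ℕ, PA (1 / 2) s i₀ m (k * i₀)) = 2 * (i₀ : ℝ) * φ₂ ^ k / (1 - s) := by
  have hp : 0 < i₀ := by omega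
  have h1s : (0:ℝ) < 1 - s := by linarith
  have hi2 : (2:ℝ) ≤ (i₀:ℝ) := by exact_mod_cast hi₀
  have hθ2 : 2 < θ := by
    have h1 : (i₀:ℝ) * (1 - s) < (i₀:ℝ) := by nlinarith
    have h2 : (i₀:ℝ) < (i₀:ℝ) / (1 - s) := (lt_div_iff₀ h1s).mpr h1
    rw [hθ]; linarith
  have hd4 : 0 ≤ θ ^ 2 - 4 := by nlinarith
  have hsq := Real.sq_sqrt hd4
  have hsqnn := Real.sqrt_nonneg (θ ^ 2 - 4)
  have hroot : φ₂ ^ 2 - θ * φ₂ + 1 = 0 := by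
    rw [hφ₂]
    linear_combination hsq / 4
  have hφ0 : 0 ≤ φ₂ := by
    rw [hφ₂]
    nlinarith
  have hφ1 : φ₂ ≤ 1 := by
    rw [hφ₂]
    nlinarith
  have hts : θ * (1 - s) = 2 * (i₀ : ℝ) + 2 * (1 - (i₀ : ℝ)) * (1 - s) := by
    rw [hθ]
    field_simp
    ring
  have hWU := W_eq_U hs.le hs1 hi₀ hφ0 hφ1 hroot hts
  refine ⟨PA_summable hs.le hs1 hi₀ hφ0 hφ1 hroot hts, ?_, ?_⟩
  · rw [hWU 0, Uf]; simp
  · intro k hk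
    rw [hWU (k * i₀), Uf, if_neg (by positivity),
      cA_of_dvd (by positivity) (dvd_mul_left i₀ k)]
    have hv := Vf_eq (φ₂ := φ₂) hp hk (Nat.zero_le i₀) (r := 0)
    rw [Nat.add_zero] at hv
    rw [hv]
    push_cast
    ring
end

section
/- (Constant ratio of absorption probabilities, case ω ≠ 1.) With P_B(0) = ω^{−i₀}·φ₂/(1 − s), P_C(0) = 1/(1 + ω^{i₀} − φ₂), P_B(k·i₀) = s·(ω^{−i₀} − 1)·φ₂^k/((1 − s)²·(q − p)) and P_C(k·i₀) = s·(1 − ω^{i₀})·φ₂^{k−1}/((1 − s)(q − p)(1 + ω^{i₀} − φ₂)) for integers k ≥ 2, one has P_B(0)/P_C(0) = P_B(k·i₀)/P_C(k·i₀) = φ₂·(1 + ω^{i₀} − φ₂)/((1 − s)·ω^{i₀}) for every k ≥ 2, and this common ratio is strictly less than 1. -/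
/-!
Writing `S = ∑_{j < i₀} ω ^ j` and `M = S / (q (1 - s))`, the geometric sums hidden in the slopes
defining `θ` give `θ = M - 2 (S - 1)`, hence `θ - 1 - ω ^ i₀ = s M` (using `q (1 + ω) = 1`).
Since `φ₂² = θ φ₂ - ω ^ i₀`, the ratio is `< 1` iff `s ω ^ i₀ < s φ₂ M`, i.e. iff `M` exceeds the
larger root `ω ^ i₀ / φ₂` of `X² - θ X + ω ^ i₀`; this holds since `M > θ / 2` and
`M² - θ M + ω ^ i₀ = 2 M (S - 1) + ω ^ i₀ > 0`.
-/

open Finset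

lemma sub_div_sub_min_max {𝕜 : Type*} [Field 𝕜] [LinearOrder 𝕜] (f : 𝕜 → 𝕜) (a b : 𝕜) :
    (f (min a b) - f (max a b)) / (min a b - max a b) = (f b - f a) / (b - a) := by
  rcases le_total a b with h | h
  · rw [min_eq_left h, max_eq_right h, ← neg_div_neg_eq, neg_sub, neg_sub]
  · rw [min_eq_right h, max_eq_left h]

lemma min_max_pow_sub_div_eq_geom_sum {ω : ℝ} (hω : ω ≠ 1) (n : ℕ) :
    (min 1 ω ^ n - max 1 ω ^ n) / (min 1 ω - max 1 ω) = ∑ j ∈ range n, ω ^ j :=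
  (sub_div_sub_min_max (· ^ n) 1 ω).trans (by rw [one_pow, geom_sum_eq hω])

lemma one_lt_geom_sum {x : ℝ} (hx : 0 < x) {n : ℕ} (hn : 2 ≤ n) :
    1 < ∑ j ∈ range n, x ^ j := by
  obtain ⟨m, rfl⟩ := Nat.exists_eq_add_of_le' hn
  rw [geom_sum_succ]
  nlinarith [geom_sum_pos hx.le (by omega : m + 1 ≠ 0)]

lemma theta_eq_geom_sum {p q s ω : ℝ} {n : ℕ} (hn : n ≠ 0) (hω : ω ≠ 1) (hq : q ≠ 0)
    (hs : s ≠ 1) (hpω : p = ω * q) :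
    ((min 1 ω ^ n - max 1 ω ^ n) / (1 - s) - 2 * p * (min 1 ω ^ (n - 1) - max 1 ω ^ (n - 1))) /
      (q * (min 1 ω - max 1 ω)) =
      (∑ j ∈ range n, ω ^ j) / (q * (1 - s)) - 2 * (∑ j ∈ range n, ω ^ j - 1) := by
  obtain ⟨m, rfl⟩ := Nat.exists_eq_add_one_of_ne_zero hn
  have hs' : 1 - s ≠ 0 := sub_ne_zero.2 (Ne.symm hs)
  rw [mul_comm q, ← div_div, sub_div, mul_div_assoc, div_right_comm, Nat.add_sub_cancel,
    min_max_pow_sub_div_eq_geom_sum hω, min_max_pow_sub_div_eq_geom_sum hω, geom_sum_succ, hpω]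
  field_simp
  ring

lemma smaller_root_mul_eq {θ a φ : ℝ} (hD : 0 ≤ θ ^ 2 - 4 * a)
    (hφ : φ = (θ - √(θ ^ 2 - 4 * a)) / 2) : φ * (θ - φ) = a := by
  have h := Real.sq_sqrt hD
  rw [hφ]
  linear_combination -h / 4

lemma lt_smaller_root_mul {θ a φ x : ℝ} (hD : 0 ≤ θ ^ 2 - 4 * a)
    (hφ : φ = (θ - √(θ ^ 2 - 4 * a)) / 2) (hφ0 : 0 < φ) (hθx : θ < 2 * x)
    (hx : 0 < x ^ 2 - θ * x + a) : a < φ * x := by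
  have hsqrt : √(θ ^ 2 - 4 * a) < 2 * x - θ :=
    (Real.sqrt_lt' (by linarith)).2 (by nlinarith)
  calc a = φ * (θ - φ) := (smaller_root_mul_eq hD hφ).symm
    _ < φ * x := mul_lt_mul_of_pos_left (by rw [hφ]; linarith) hφ0

lemma smaller_root_mul_one_add_sub_lt {θ a s M φ : ℝ} (hs : 0 < s) (ha : 0 < a) (hM : 0 < M)
    (hθM : θ < M) (hθa : θ - 1 - a = s * M) (hφ : φ = (θ - √(θ ^ 2 - 4 * a)) / 2)
    (hφ0 : 0 < φ) : φ * (1 + a - φ) < (1 - s) * a := by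
  have hD : 0 ≤ θ ^ 2 - 4 * a := by nlinarith [sq_nonneg (1 - a), mul_pos hs hM]
  have haM : a < φ * M := lt_smaller_root_mul hD hφ hφ0 (by linarith) (by nlinarith)
  calc φ * (1 + a - φ) = a - s * (φ * M) := by
        linear_combination smaller_root_mul_eq hD hφ - φ * hθa
    _ < a - s * a := by nlinarith
    _ = (1 - s) * a := by ring

/-- Constant ratio between the absorption probabilities of players B and C,
case `ω ≠ 1`. -/
theorem constant_ratio_omega_ne_one (p s : ℝ) (i₀ : ℕ)
    (hp : 0 < p) (hp1 : p < 1) (hp2 : p ≠ 1 / 2) (hs : 0 < s) (hs1 : s < 1) (hi₀ : 2 ≤ i₀)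
    (q ω τ₁ τ₂ θ φ₂ : ℝ)
    (hq : q = 1 - p) (hω : ω = p / q)
    (hτ₁ : τ₁ = max 1 ω) (hτ₂ : τ₂ = min 1 ω)
    (hθ : θ = ((τ₂ ^ i₀ - τ₁ ^ i₀) / (1 - s) - 2 * p * (τ₂ ^ (i₀ - 1) - τ₁ ^ (i₀ - 1))) /
      (q * (τ₂ - τ₁)))
    (hφ₂ : φ₂ = (θ - Real.sqrt (θ ^ 2 - 4 * ω ^ i₀)) / 2)
    (hφ₂pos : 0 < φ₂) (hφ₂lt : φ₂ < 1)
    (PB₀ PC₀ : ℝ) (PBk PCk : ℕ → ℝ)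
    (hPB₀ : PB₀ = (ω ^ i₀)⁻¹ * φ₂ / (1 - s))
    (hPC₀ : PC₀ = 1 / (1 + ω ^ i₀ - φ₂))
    (hPBk : ∀ k : ℕ, 2 ≤ k →
      PBk k = s * ((ω ^ i₀)⁻¹ - 1) * φ₂ ^ k / ((1 - s) ^ 2 * (q - p)))
    (hPCk : ∀ k : ℕ, 2 ≤ k →
      PCk k = s * (1 - ω ^ i₀) * φ₂ ^ (k - 1) / ((1 - s) * (q - p) * (1 + ω ^ i₀ - φ₂))) :
    PB₀ / PC₀ = φ₂ * (1 + ω ^ i₀ - φ₂) / ((1 - s) * ω ^ i₀) ∧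
    (∀ k : ℕ, 2 ≤ k →
      PBk k / PCk k = φ₂ * (1 + ω ^ i₀ - φ₂) / ((1 - s) * ω ^ i₀)) ∧
    φ₂ * (1 + ω ^ i₀ - φ₂) / ((1 - s) * ω ^ i₀) < 1 := by
  have hq0 : 0 < q := by linarith
  have hs0 : 1 - s ≠ 0 := by linarith
  have hω0 : 0 < ω := by rw [hω]; positivity
  have hpω : p = ω * q := by rw [hω]; field_simp
  have hqω : q * (1 + ω) = 1 := by linarith
  have hqp : q - p ≠ 0 := fun h => hp2 (by linarith)
  have hω1 : ω ≠ 1 := fun h => hqp (by rw [hpω, h]; ring)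
  have ha1 : 1 - ω ^ i₀ ≠ 0 := by
    rwa [sub_ne_zero, ne_comm, Ne, pow_eq_one_iff_of_nonneg hω0.le (by omega)]
  set S := ∑ j ∈ range i₀, ω ^ j
  have hS : 1 < S := one_lt_geom_sum hω0 hi₀
  have hθS : θ = S / (q * (1 - s)) - 2 * (S - 1) := by
    rw [hθ, hτ₁, hτ₂, theta_eq_geom_sum (by omega) hω1 hq0.ne' hs1.ne hpω]
  have hθa : θ - 1 - ω ^ i₀ = s * (S / (q * (1 - s))) := by
    have hgeom : S * (ω - 1) = ω ^ i₀ - 1 := geom_sum_mul ω i₀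
    rw [hθS]
    field_simp
    linear_combination (1 - s) * q * hgeom - S * (1 - s) * hqω
  have hlt := smaller_root_mul_one_add_sub_lt hs (pow_pos hω0 i₀)
    (div_pos (by linarith) (mul_pos hq0 (by linarith)))
    (by rw [hθS]; linarith) hθa hφ₂ hφ₂pos
  have hφ₂a : 1 + ω ^ i₀ - φ₂ ≠ 0 := by linarith [pow_pos hω0 i₀]
  refine ⟨?_, fun k hk => ?_, (div_lt_one (by positivity)).2 hlt⟩
  · rw [hPB₀, hPC₀]
    field_simp
  · rw [hPBk k hk, hPCk k hk, ← pow_sub_one_mul (by omega : k ≠ 0) φ₂]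
    field_simp
end

section
/- (Theorem 8.) For i = 1, 2 the function z ↦ φ_i(z) is differentiable at z = 1, and its derivative at z = 1 equals (−1)^i · [φ_i(1)/(φ₂(1) − φ₁(1))] · [4pq·θ(1) − i₀·(1 + ω^{i₀})/(1 − s) + 2p·((p − q)(1 − ω^{i₀−1}) + (i₀ − 1)(1 + ω^{i₀−1}))] / (p − q)². -/
/-!
`φ₁, φ₂` are the roots of `φ² - θ φ + ω^{i₀}`, so differentiating that equation gives
`φᵢ' = (-1)^i φᵢ θ' / (φ₂ - φ₁)` wherever the discriminant `θ² - 4ω^{i₀}` is positive.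
At `z = 1` the roots of `q z τ² - τ + p z` are `1` and `ω` (which of `τ₁, τ₂` is which depends on
the sign of `p - q`, but `θ` is symmetric in them), and implicit differentiation gives
`τ' = -τ / (z (2 q z τ - 1))`, i.e. `1 / (p - q)` at `τ = 1` and `-ω / (p - q)` at `τ = ω`.
The quotient rule then yields `θ'(1)`. Finally
`θ(1) = 1 + ω^{i₀} + (ω^{i₀} - 1) s / ((p - q)(1 - s)) > 1 + ω^{i₀} ≥ 2 ω^{i₀/2}`,
so the discriminant is positive at `z = 1`.
-/

open Set

theorem hasDerivAt_quadRoot {σ c t : ℝ} (hσ : σ ^ 2 = 1) (ht : 4 * c < t ^ 2) :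
    HasDerivAt (fun u => (u + σ * Real.sqrt (u ^ 2 - 4 * c)) / 2)
      (σ * ((t + σ * Real.sqrt (t ^ 2 - 4 * c)) / 2) / Real.sqrt (t ^ 2 - 4 * c)) t := by
  have hD : 0 < t ^ 2 - 4 * c := sub_pos.mpr ht
  have hsqrt0 := (Real.sqrt_pos.mpr hD).ne'
  have hdisc : HasDerivAt (fun u => u ^ 2 - 4 * c) (2 * t) t :=
    ((hasDerivAt_pow 2 t).sub_const _).congr_deriv (by norm_num)
  refine (((hasDerivAt_id' t).add ((hdisc.sqrt hD.ne').const_mul σ)).div_const 2).congr_deriv ?_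
  field_simp
  linear_combination -Real.sqrt (t ^ 2 - 4 * c) * hσ

theorem hasDerivWithinAt_quadRoots {f φ₁ φ₂ : ℝ → ℝ} {S : Set ℝ} {x f' c : ℝ} (hx : x ∈ S)
    (hf : HasDerivAt f f' x) (hc : 4 * c < f x ^ 2)
    (hφ₁ : EqOn φ₁ (fun y => (f y + Real.sqrt (f y ^ 2 - 4 * c)) / 2) S)
    (hφ₂ : EqOn φ₂ (fun y => (f y - Real.sqrt (f y ^ 2 - 4 * c)) / 2) S) :
    HasDerivWithinAt φ₁ (-(φ₁ x / (φ₂ x - φ₁ x)) * f') S x ∧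
      HasDerivWithinAt φ₂ (φ₂ x / (φ₂ x - φ₁ x) * f') S x := by
  have hgap : φ₂ x - φ₁ x = -Real.sqrt (f x ^ 2 - 4 * c) := by
    rw [hφ₁ hx, hφ₂ hx]; ring
  have hsqrt0 := (Real.sqrt_pos.mpr (sub_pos.mpr hc)).ne'
  constructor
  · refine (((hasDerivAt_quadRoot (σ := 1) (by norm_num) hc).comp x hf).hasDerivWithinAt
      |>.congr_of_mem (fun y hy => (hφ₁ hy).trans (by simp)) hx).congr_deriv ?_
    rw [hgap, hφ₁ hx]
    field_simp
  · refine (((hasDerivAt_quadRoot (σ := -1) (by norm_num) hc).comp x hf).hasDerivWithinAt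
      |>.congr_of_mem (fun y hy => (hφ₂ hy).trans (by simp; ring)) hx).congr_deriv ?_
    rw [hgap, hφ₂ hx]
    field_simp
    ring

noncomputable def rootBranch (p q ε z : ℝ) : ℝ :=
  (1 + ε * Real.sqrt (1 - 4 * p * q * z ^ 2)) / (2 * q * z)

theorem hasDerivAt_rootBranch {p q ε z : ℝ} (hε : ε ^ 2 = 1) (hq : q ≠ 0) (hz : z ≠ 0)
    (hD : 0 < 1 - 4 * p * q * z ^ 2) :
    HasDerivAt (rootBranch p q ε)
      (-rootBranch p q ε z / (z * (2 * q * z * rootBranch p q ε z - 1))) z := by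
  have hdisc : HasDerivAt (fun y => 1 - 4 * p * q * y ^ 2) (-(8 * p * q * z)) z :=
    (((hasDerivAt_pow 2 z).const_mul (4 * p * q)).const_sub 1).congr_deriv (by norm_num; ring)
  have hε0 : ε ≠ 0 := by rintro rfl; norm_num at hε
  have h2qz : 2 * q * z ≠ 0 := by simp [hq, hz]
  refine (((hdisc.sqrt hD.ne').const_mul ε).const_add 1
    |>.div (hasDerivAt_const_mul (2 * q)) h2qz).congr_deriv ?_
  unfold rootBranch
  rw [mul_div_cancel₀ _ h2qz, add_sub_cancel_left]
  set r := Real.sqrt (1 - 4 * p * q * z ^ 2)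
  have hr : r ^ 2 = 1 - 4 * p * q * z ^ 2 := Real.sq_sqrt hD.le
  have hr0 : r ≠ 0 := (Real.sqrt_pos.mpr hD).ne'
  field_simp
  linear_combination (-2) * hε - 2 * ε ^ 2 * hr

section RootBranchAtOne

variable {p q ε : ℝ}

theorem rootBranch_one_of_lt (hq : q = 1 - p) (hpq : p < q) :
    rootBranch p q 1 1 = 1 ∧ rootBranch p q (-1) 1 = p / q := by
  have hq0 : q ≠ 0 := by linarith
  unfold rootBranch
  rw [show 1 - 4 * p * q * 1 ^ 2 = (q - p) ^ 2 by rw [hq]; ring, Real.sqrt_sq (by linarith)]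
  constructor <;> field_simp <;> linarith

theorem rootBranch_one_of_gt (hq : q = 1 - p) (hq0 : 0 < q) (hpq : q < p) :
    rootBranch p q 1 1 = p / q ∧ rootBranch p q (-1) 1 = 1 := by
  unfold rootBranch
  rw [show 1 - 4 * p * q * 1 ^ 2 = (p - q) ^ 2 by rw [hq]; ring, Real.sqrt_sq (by linarith)]
  constructor <;> field_simp <;> linarith

theorem hasDerivAt_rootBranch_one (hq : q = 1 - p) (hq0 : q ≠ 0) (hpq : p ≠ q) (hε : ε ^ 2 = 1) :
    HasDerivAt (rootBranch p q ε) (-rootBranch p q ε 1 / (2 * q * rootBranch p q ε 1 - 1)) 1 := by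
  have hD : 0 < 1 - 4 * p * q * 1 ^ 2 := by
    rw [show 1 - 4 * p * q * 1 ^ 2 = (p - q) ^ 2 by rw [hq]; ring]
    exact sq_pos_of_ne_zero (sub_ne_zero.mpr hpq)
  simpa using hasDerivAt_rootBranch hε hq0 one_ne_zero hD

theorem hasDerivAt_rootBranch_of_eq_one (hq : q = 1 - p) (hq0 : q ≠ 0) (hpq : p ≠ q)
    (hε : ε ^ 2 = 1) (h1 : rootBranch p q ε 1 = 1) :
    HasDerivAt (rootBranch p q ε) (1 / (p - q)) 1 := by
  convert hasDerivAt_rootBranch_one hq hq0 hpq hε using 1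
  rw [h1, show 2 * q * 1 - 1 = -(p - q) by rw [hq]; ring, neg_div_neg_eq]

theorem hasDerivAt_rootBranch_of_eq_div (hq : q = 1 - p) (hq0 : q ≠ 0) (hpq : p ≠ q)
    (hε : ε ^ 2 = 1) (h1 : rootBranch p q ε 1 = p / q) :
    HasDerivAt (rootBranch p q ε) (-(p / q) / (p - q)) 1 := by
  convert hasDerivAt_rootBranch_one hq hq0 hpq hε using 1
  rw [h1, show 2 * q * (p / q) - 1 = p - q by field_simp; rw [hq]; ring]

end RootBranchAtOne

noncomputable def thetaOfRoots (p q s : ℝ) (n : ℕ) (a b z : ℝ) : ℝ :=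
  ((a ^ n - b ^ n) / (1 - s) - 2 * p * z * (a ^ (n - 1) - b ^ (n - 1))) / (q * z * (a - b))

theorem thetaOfRoots_comm (p q s : ℝ) (n : ℕ) (a b z : ℝ) :
    thetaOfRoots p q s n a b z = thetaOfRoots p q s n b a z := by
  unfold thetaOfRoots
  rw [← neg_sub b a, mul_neg, div_neg]
  ring

section ThetaOfRootsAtOne

variable {p q s ω : ℝ} {n : ℕ}

theorem thetaOfRoots_one (hq : q = 1 - p) (hq0 : q ≠ 0) (hpq : p ≠ q) (hs : s ≠ 1)
    (hω : ω = p / q) (hn : 1 ≤ n) :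
    thetaOfRoots p q s n ω 1 1 = 1 + ω ^ n + (ω ^ n - 1) / (p - q) * (s / (1 - s)) := by
  obtain ⟨k, rfl⟩ := Nat.exists_eq_add_of_le' hn
  have h1s : 1 - s ≠ 0 := sub_ne_zero.mpr hs.symm
  have hpq' : p - q ≠ 0 := sub_ne_zero.mpr hpq
  rw [thetaOfRoots, show q * 1 * (ω - 1) = p - q by rw [hω]; field_simp, Nat.add_sub_cancel,
    pow_succ, one_pow, one_pow]
  generalize ω ^ k = x
  subst hω hq
  field_simp
  ring

theorem four_mul_pow_lt_sq_thetaOfRoots_one (hp : 0 < p) (hq : q = 1 - p) (hq0 : 0 < q)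
    (hpq : p ≠ q) (hs : 0 < s) (hs1 : s < 1) (hω : ω = p / q) (hn : 1 ≤ n) :
    4 * ω ^ n < thetaOfRoots p q s n ω 1 1 ^ 2 := by
  have hω0 : 0 < ω := hω ▸ div_pos hp hq0
  have hgap : 0 < (ω ^ n - 1) / (p - q) := by
    rcases hpq.lt_or_gt with hlt | hgt
    · have : ω ^ n < 1 := pow_lt_one₀ hω0.le (by rwa [hω, div_lt_one hq0]) (by omega)
      exact div_pos_of_neg_of_neg (by linarith) (by linarith)
    · have : 1 < ω ^ n := one_lt_pow₀ (by rwa [hω, one_lt_div hq0]) (by omega)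
      exact div_pos (by linarith) (by linarith)
  have hlt : 1 + ω ^ n < thetaOfRoots p q s n ω 1 1 := by
    rw [thetaOfRoots_one hq hq0.ne' hpq hs1.ne hω hn]
    have := mul_pos hgap (div_pos hs (sub_pos.mpr hs1))
    linarith
  nlinarith [sq_nonneg (1 - ω ^ n), pow_pos hω0 n]

theorem hasDerivAt_thetaOfRoots {A B : ℝ → ℝ} (hq : q = 1 - p) (hq0 : q ≠ 0) (hpq : p ≠ q)
    (hs : s ≠ 1) (hω : ω = p / q) (hn : 1 ≤ n)
    (hA : HasDerivAt A (-ω / (p - q)) 1) (hA1 : A 1 = ω)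
    (hB : HasDerivAt B (1 / (p - q)) 1) (hB1 : B 1 = 1) :
    HasDerivAt (fun z => thetaOfRoots p q s n (A z) (B z) z)
      ((4 * p * q * thetaOfRoots p q s n ω 1 1 - (n : ℝ) * (1 + ω ^ n) / (1 - s) +
          2 * p * ((p - q) * (1 - ω ^ (n - 1)) + ((n : ℝ) - 1) * (1 + ω ^ (n - 1)))) /
        (p - q) ^ 2) 1 := by
  obtain ⟨k, rfl⟩ := Nat.exists_eq_add_of_le' hn
  have hden : q * (ω - 1) = p - q := by rw [hω]; field_simp
  have hN := (((hA.pow (k + 1)).sub (hB.pow (k + 1))).div_const (1 - s)).sub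
    ((hasDerivAt_const_mul (2 * p)).mul ((hA.pow k).sub (hB.pow k)))
  have hD := (hasDerivAt_const_mul q).mul (hA.sub hB)
  have hD0 : q * 1 * (A 1 - B 1) ≠ 0 := by
    rw [hA1, hB1, mul_one, hden]; exact sub_ne_zero.mpr hpq
  refine (hN.div hD hD0).congr_deriv ?_
  have hk : (k : ℝ) * ω ^ (k - 1) * (-ω / (p - q)) = -(k * ω ^ k) / (p - q) := by
    cases k <;> simp [pow_succ]; ring
  have h1s : 1 - s ≠ 0 := sub_ne_zero.mpr hs.symm
  have hpq' : p - q ≠ 0 := sub_ne_zero.mpr hpq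
  simp only [Pi.mul_apply, Pi.sub_apply, Pi.pow_apply, hA1, hB1, thetaOfRoots,
    Nat.add_sub_cancel, one_pow, mul_one, hk]
  rw [hden, pow_succ]
  generalize ω ^ k = x
  subst hω hq
  push_cast
  field_simp
  ring

end ThetaOfRootsAtOne

noncomputable def theta (p q s : ℝ) (n : ℕ) (z : ℝ) : ℝ :=
  thetaOfRoots p q s n (rootBranch p q (-1) z) (rootBranch p q 1 z) z

section ThetaAtOne

variable {p q s ω : ℝ} {n : ℕ}

theorem theta_one (hq : q = 1 - p) (hq0 : 0 < q) (hpq : p ≠ q) (hω : ω = p / q) :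
    theta p q s n 1 = thetaOfRoots p q s n ω 1 1 := by
  rcases hpq.lt_or_gt with hlt | hgt
  · obtain ⟨h₁, h₂⟩ := rootBranch_one_of_lt hq hlt
    rw [theta, h₁, h₂, hω]
  · obtain ⟨h₁, h₂⟩ := rootBranch_one_of_gt hq hq0 hgt
    rw [theta, h₁, h₂, hω, thetaOfRoots_comm]

theorem hasDerivAt_theta (hq : q = 1 - p) (hq0 : 0 < q) (hpq : p ≠ q) (hs : s ≠ 1)
    (hω : ω = p / q) (hn : 1 ≤ n) :
    HasDerivAt (theta p q s n)
      ((4 * p * q * theta p q s n 1 - (n : ℝ) * (1 + ω ^ n) / (1 - s) +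
          2 * p * ((p - q) * (1 - ω ^ (n - 1)) + ((n : ℝ) - 1) * (1 + ω ^ (n - 1)))) /
        (p - q) ^ 2) 1 := by
  rw [theta_one hq hq0 hpq hω]
  subst hω
  rcases hpq.lt_or_gt with hlt | hgt
  · obtain ⟨h₁, h₂⟩ := rootBranch_one_of_lt hq hlt
    exact hasDerivAt_thetaOfRoots hq hq0.ne' hpq hs rfl hn
      (hasDerivAt_rootBranch_of_eq_div hq hq0.ne' hpq neg_one_sq h₂) h₂
      (hasDerivAt_rootBranch_of_eq_one hq hq0.ne' hpq (one_pow 2) h₁) h₁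
  · obtain ⟨h₁, h₂⟩ := rootBranch_one_of_gt hq hq0 hgt
    rw [show theta p q s n = fun z => thetaOfRoots p q s n (rootBranch p q 1 z)
      (rootBranch p q (-1) z) z from funext fun z => thetaOfRoots_comm ..]
    exact hasDerivAt_thetaOfRoots hq hq0.ne' hpq hs rfl hn
      (hasDerivAt_rootBranch_of_eq_div hq hq0.ne' hpq (one_pow 2) h₁) h₁
      (hasDerivAt_rootBranch_of_eq_one hq hq0.ne' hpq neg_one_sq h₂) h₂

end ThetaAtOne

/-- Theorem 8 of the paper: the derivatives of `φ₁` and `φ₂` (as functions of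
the moment-generating-function variable `z`, on `(0, 1]`) at `z = 1`. -/
theorem theorem8 (p s : ℝ) (i₀ : ℕ)
    (hp : 0 < p) (hp1 : p < 1) (hp2 : p ≠ 1 / 2) (hs : 0 < s) (hs1 : s < 1) (hi₀ : 2 ≤ i₀)
    (q ω : ℝ) (hq : q = 1 - p) (hω : ω = p / q)
    (τ₁ τ₂ θ φ₁ φ₂ : ℝ → ℝ)
    (hτ₁ : ∀ z ∈ Set.Ioc (0 : ℝ) 1,
      τ₁ z = (1 + Real.sqrt (1 - 4 * p * q * z ^ 2)) / (2 * q * z))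
    (hτ₂ : ∀ z ∈ Set.Ioc (0 : ℝ) 1,
      τ₂ z = (1 - Real.sqrt (1 - 4 * p * q * z ^ 2)) / (2 * q * z))
    (hθ : ∀ z ∈ Set.Ioc (0 : ℝ) 1,
      θ z = ((τ₂ z ^ i₀ - τ₁ z ^ i₀) / (1 - s) -
          2 * p * z * (τ₂ z ^ (i₀ - 1) - τ₁ z ^ (i₀ - 1))) /
        (q * z * (τ₂ z - τ₁ z)))
    (hφ₁ : ∀ z ∈ Set.Ioc (0 : ℝ) 1,
      φ₁ z = (θ z + Real.sqrt (θ z ^ 2 - 4 * ω ^ i₀)) / 2)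
    (hφ₂ : ∀ z ∈ Set.Ioc (0 : ℝ) 1,
      φ₂ z = (θ z - Real.sqrt (θ z ^ 2 - 4 * ω ^ i₀)) / 2) :
    HasDerivWithinAt φ₁
      ((-1 : ℝ) ^ (1 : ℕ) * (φ₁ 1 / (φ₂ 1 - φ₁ 1)) *
        ((4 * p * q * θ 1 - (i₀ : ℝ) * (1 + ω ^ i₀) / (1 - s) +
            2 * p * ((p - q) * (1 - ω ^ (i₀ - 1)) + ((i₀ : ℝ) - 1) * (1 + ω ^ (i₀ - 1)))) /
          (p - q) ^ 2))
      (Set.Ioc (0 : ℝ) 1) 1 ∧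
    HasDerivWithinAt φ₂
      ((-1 : ℝ) ^ (2 : ℕ) * (φ₂ 1 / (φ₂ 1 - φ₁ 1)) *
        ((4 * p * q * θ 1 - (i₀ : ℝ) * (1 + ω ^ i₀) / (1 - s) +
            2 * p * ((p - q) * (1 - ω ^ (i₀ - 1)) + ((i₀ : ℝ) - 1) * (1 + ω ^ (i₀ - 1)))) /
          (p - q) ^ 2))
      (Set.Ioc (0 : ℝ) 1) 1 := by
  have hq0 : 0 < q := by linarith
  have hpq : p ≠ q := fun h => hp2 (by linarith)
  have hn : 1 ≤ i₀ := by omega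
  have hθ' : EqOn θ (theta p q s i₀) (Ioc 0 1) := fun z hz => by
    rw [hθ z hz, hτ₁ z hz, hτ₂ z hz, theta, thetaOfRoots, rootBranch, rootBranch, one_mul,
      neg_one_mul, ← sub_eq_add_neg]
  have hmem : (1 : ℝ) ∈ Ioc 0 1 := ⟨one_pos, le_rfl⟩
  rw [hθ' hmem, pow_one, neg_one_mul, neg_one_sq, one_mul]
  exact hasDerivWithinAt_quadRoots hmem (hasDerivAt_theta hq hq0 hpq hs1.ne hω hn)
    (theta_one hq hq0 hpq hω ▸ four_mul_pow_lt_sq_thetaOfRoots_one hp hq hq0 hpq hs hs1 hω hn)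
    (fun z hz => by rw [hφ₁ z hz, hθ' hz]) (fun z hz => by rw [hφ₂ z hz, hθ' hz])
end
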